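/- For all complex numbers u and v, |e^u − 1 − v| ≤ (|u − v| + |v|²/2) · e^{max(|u|,|v|)}. -/

import Mathlib

open scoped Nat
set_option maxHeartbeats 1000000

open Complex in
lemma aux_exp_diff (u v : ℂ) :
    ‖Complex.exp u - Complex.exp v‖ ≤
      ‖u - v‖ * Real.exp (max (‖u‖) (‖v‖)) := by
  set r := max (‖u‖) (‖v‖) with hr
  have h := Convex.norm_image_sub_le_of_norm_hasDerivWithin_le
    (f := Complex.exp) (f' := Complex.exp) (s := Metric.closedBall (0 : ℂ) r)
    (C := Real.exp r)
    (fun x _ => (Complex.hasDerivAt_exp x).hasDerivWithinAt)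
    (fun x hx => by
      rw [Complex.norm_exp]
      refine Real.exp_le_exp.2 ((Complex.re_le_norm x).trans ?_)
      simpa [Complex.dist_eq] using Metric.mem_closedBall.1 hx)
    (convex_closedBall _ _)
    (by simp only [Metric.mem_closedBall, Complex.dist_eq, sub_zero]; exact le_max_right _ _)
    (by simp only [Metric.mem_closedBall, Complex.dist_eq, sub_zero]; exact le_max_left _ _)
  calc ‖Complex.exp u - Complex.exp v‖
      ≤ Real.exp r * ‖u - v‖ := h
    _ = ‖u - v‖ * Real.exp r := by rw [mul_comm]

lemma aux_series (v : ℂ) :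
    ‖Complex.exp v - 1 - v‖ ≤
      ‖v‖ ^ 2 / 2 * Real.exp (‖v‖) := by
  have hs : Summable (fun n : ℕ => v ^ n / (n ! : ℂ)) := NormedSpace.expSeries_div_summable v
  have hexp : Complex.exp v = ∑' n : ℕ, v ^ n / (n ! : ℂ) := by
    rw [Complex.exp_eq_exp_ℂ, NormedSpace.exp_eq_tsum_div]
  have hshift : Complex.exp v - 1 - v = ∑' n : ℕ, v ^ (n + 2) / ((n + 2)! : ℂ) := by
    have h1 : ∑' n : ℕ, v ^ n / (n ! : ℂ) = v ^ 0 / (0! : ℂ) + ∑' n : ℕ, v ^ (n + 1) / ((n + 1)! : ℂ) :=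
      hs.tsum_eq_zero_add
    have hs1 : Summable (fun n : ℕ => v ^ (n + 1) / ((n + 1)! : ℂ)) :=
      (summable_nat_add_iff 1).2 hs
    have h2 : ∑' n : ℕ, v ^ (n + 1) / ((n + 1)! : ℂ) =
        v ^ 1 / (1! : ℂ) + ∑' n : ℕ, v ^ (n + 2) / ((n + 2)! : ℂ) := by
      simpa using hs1.tsum_eq_zero_add
    rw [hexp, h1, h2]
    simp
  have hnorm : Summable (fun n : ℕ => ‖v‖ ^ (n + 2) / ((n + 2)! : ℝ)) :=
    (summable_nat_add_iff 2).2 (Real.summable_pow_div_factorial (‖v‖))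
  have hbig : Summable (fun n : ℕ => ‖v‖ ^ 2 / 2 * (‖v‖ ^ n / (n ! : ℝ))) :=
    (Real.summable_pow_div_factorial (‖v‖)).mul_left _
  calc ‖Complex.exp v - 1 - v‖
      = ‖∑' n : ℕ, v ^ (n + 2) / ((n + 2)! : ℂ)‖ := by rw [hshift]
    _ ≤ ∑' n : ℕ, ‖v ^ (n + 2) / ((n + 2)! : ℂ)‖ := by
        refine norm_tsum_le_tsum_norm ?_
        simpa [map_div₀, map_pow] using hnorm
    _ = ∑' n : ℕ, ‖v‖ ^ (n + 2) / ((n + 2)! : ℝ) := by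
        congr 1; funext n; simp [map_div₀, map_pow, Complex.norm_natCast]
    _ ≤ ∑' n : ℕ, ‖v‖ ^ 2 / 2 * (‖v‖ ^ n / (n ! : ℝ)) := by
        refine hnorm.tsum_le_tsum (fun n => ?_) hbig
        have hfac : (2 : ℝ) * n ! ≤ ((n + 2)! : ℝ) := by
          have : 2 * n ! ≤ (n + 2)! := by
            rw [show n + 2 = (n + 1) + 1 from rfl, Nat.factorial_succ, Nat.factorial_succ]
            have h1 : 1 ≤ n ! := Nat.one_le_iff_ne_zero.2 (Nat.factorial_ne_zero n)
            calc 2 * n ! ≤ (n + 1 + 1) * n ! := Nat.mul_le_mul_right _ (by omega)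
              _ ≤ (n + 1 + 1) * ((n + 1) * n !) :=
                Nat.mul_le_mul_left _ (Nat.le_mul_of_pos_left _ (by omega))
          exact_mod_cast this
        have hrw : ‖v‖ ^ 2 / 2 * (‖v‖ ^ n / (n ! : ℝ)) =
            ‖v‖ ^ (n + 2) / (2 * (n ! : ℝ)) := by
          rw [pow_add]; field_simp
        rw [hrw]
        apply div_le_div_of_nonneg_left ?_ ?_ hfac
        · positivity
        · positivity
    _ = ‖v‖ ^ 2 / 2 * ∑' n : ℕ, ‖v‖ ^ n / (n ! : ℝ) := tsum_mul_left
    _ = ‖v‖ ^ 2 / 2 * Real.exp (‖v‖) := by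
        rw [Real.exp_eq_exp_ℝ, NormedSpace.exp_eq_tsum_div]

theorem stmt_3 (u v : ℂ) :
    ‖Complex.exp u - 1 - v‖ ≤
      (‖u - v‖ + ‖v‖ ^ 2 / 2) *
        Real.exp (max (‖u‖) (‖v‖)) := by
  have key : Complex.exp u - 1 - v = (Complex.exp u - Complex.exp v) + (Complex.exp v - 1 - v) := by
    ring
  have h1 := aux_exp_diff u v
  have h2 := aux_series v
  have h3 : Real.exp (‖v‖) ≤ Real.exp (max (‖u‖) (‖v‖)) :=
    Real.exp_le_exp.2 (le_max_right _ _)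
  calc ‖Complex.exp u - 1 - v‖
      ≤ ‖Complex.exp u - Complex.exp v‖ + ‖Complex.exp v - 1 - v‖ := by
        rw [key]; exact norm_add_le _ _
    _ ≤ ‖u - v‖ * Real.exp (max (‖u‖) (‖v‖)) +
        ‖v‖ ^ 2 / 2 * Real.exp (‖v‖) := add_le_add h1 h2
    _ ≤ ‖u - v‖ * Real.exp (max (‖u‖) (‖v‖)) +
        ‖v‖ ^ 2 / 2 * Real.exp (max (‖u‖) (‖v‖)) := by
        gcongr
    _ = (‖u - v‖ + ‖v‖ ^ 2 / 2) *
        Real.exp (max (‖u‖) (‖v‖)) := by ring
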